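/- arXiv:1704.02052 — 3 statements merged into one kernel-verified Lean document; each statement's English description precedes it below -/
import Mathlib

section
/- Let ĥf ∈ ℝ^l satisfy A ĥf = 0, let M ⊆ {1,…,l} and let f_M = ĥf_M + e_M be corrupted observations, with S = {i ∈ M : e_i ≠ 0}. Let Z be a basis matrix of Ker(A) and let x* minimize ‖Z_M x − f_M‖₁ over x ∈ ℝ^{l−n}, and set f* = Z x*. If Rec(S; A, M) > 1, then f*_M = ĥf_M (the restrictions to M agree exactly). -/
open Finset in
/-- Exact recovery on M. If the corruption support S satisfies
Rec(S; A, M) > 1 and x* is an ℓ1 minimizer of ‖Z_M x − f_M‖₁, then f* = Z x*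
agrees with the ground truth ĥf on M. -/
theorem stmt4 (n l kk : ℕ) (A : Matrix (Fin n) (Fin l) ℝ)
    (Z : Matrix (Fin l) (Fin kk) ℝ)
    (hZ : ∀ f : Fin l → ℝ, A.mulVec f = 0 ↔ ∃ x : Fin kk → ℝ, Z.mulVec x = f)
    (hf : Fin l → ℝ) (hhf : A.mulVec hf = 0)
    (M : Finset (Fin l)) (e : Fin l → ℝ)
    (fobs : Fin l → ℝ) (hfobs : ∀ i ∈ M, fobs i = hf i + e i)
    (S : Finset (Fin l)) (hS : S = M.filter (fun i => e i ≠ 0))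
    (hRec : 1 < sInf {r : ℝ | ∃ v : Fin kk → ℝ,
      (∑ i ∈ S, |Z.mulVec v i|) ≠ 0 ∧
      r = (∑ i ∈ M \ S, |Z.mulVec v i|) / (∑ i ∈ S, |Z.mulVec v i|)})
    (xstar : Fin kk → ℝ)
    (hmin : ∀ x : Fin kk → ℝ,
      (∑ i ∈ M, |Z.mulVec xstar i - fobs i|) ≤ ∑ i ∈ M, |Z.mulVec x i - fobs i|) :
    ∀ i ∈ M, Z.mulVec xstar i = hf i := by
  obtain ⟨x0, hx0⟩ := (hZ hf).1 hhf
  set h : Fin l → ℝ := fun i => Z.mulVec xstar i - hf i with hhdef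
  have hhv : ∀ i, Z.mulVec (xstar - x0) i = h i := by
    intro i
    rw [Matrix.mulVec_sub, hx0]
    simp [hhdef]
  have hSsub : S ⊆ M := by rw [hS]; exact filter_subset _ _
  have heS : ∀ i ∈ M \ S, e i = 0 := by
    intro i hi
    rw [mem_sdiff, hS, mem_filter] at hi
    by_contra hne
    exact hi.2 ⟨hi.1, hne⟩
  have hlhs : ∀ i ∈ M, Z.mulVec xstar i - fobs i = h i - e i := by
    intro i hi; rw [hfobs i hi]; simp [hhdef]; ring
  have hmin0 := hmin x0
  have hrhs : ∑ i ∈ M, |Z.mulVec x0 i - fobs i| = ∑ i ∈ S, |e i| := by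
    rw [← Finset.sum_sdiff hSsub]
    have h1 : ∑ i ∈ M \ S, |Z.mulVec x0 i - fobs i| = 0 := by
      apply Finset.sum_eq_zero
      intro i hi
      have hiM := (mem_sdiff.1 hi).1
      rw [hx0, hfobs i hiM, heS i hi]
      simp
    have h2 : ∑ i ∈ S, |Z.mulVec x0 i - fobs i| = ∑ i ∈ S, |e i| := by
      apply Finset.sum_congr rfl
      intro i hi
      rw [hx0, hfobs i (hSsub hi), show hf i - (hf i + e i) = -(e i) by ring, abs_neg]
    rw [h1, h2]; ring
  have key : ∑ i ∈ M \ S, |h i| ≤ ∑ i ∈ S, |h i| := by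
    rw [hrhs, ← Finset.sum_sdiff hSsub
      (f := fun i => |Z.mulVec xstar i - fobs i|)] at hmin0
    have e1 : ∑ i ∈ M \ S, |Z.mulVec xstar i - fobs i| = ∑ i ∈ M \ S, |h i| := by
      apply Finset.sum_congr rfl
      intro i hi
      rw [hlhs i ((mem_sdiff.1 hi).1), heS i hi, sub_zero]
    have e2 : ∑ i ∈ S, |e i| ≤
        (∑ i ∈ S, |Z.mulVec xstar i - fobs i|) + ∑ i ∈ S, |h i| := by
      rw [← Finset.sum_add_distrib]
      apply Finset.sum_le_sum
      intro i hi
      rw [hlhs i (hSsub hi)]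
      calc |e i| = |(h i - e i) - h i| := by
            rw [show (h i - e i) - h i = -(e i) by ring, abs_neg]
        _ ≤ |h i - e i| + |h i| := abs_sub _ _
    rw [e1] at hmin0
    linarith
  have hSzero : ∑ i ∈ S, |h i| = 0 := by
    by_contra hne
    have hpos : 0 < ∑ i ∈ S, |h i| :=
      lt_of_le_of_ne (Finset.sum_nonneg fun i _ => abs_nonneg _) (Ne.symm hne)
    have hmem : ((∑ i ∈ M \ S, |h i|) / (∑ i ∈ S, |h i|)) ∈
        {r : ℝ | ∃ v : Fin kk → ℝ, (∑ i ∈ S, |Z.mulVec v i|) ≠ 0 ∧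
          r = (∑ i ∈ M \ S, |Z.mulVec v i|) / (∑ i ∈ S, |Z.mulVec v i|)} := by
      refine ⟨xstar - x0, ?_, ?_⟩ <;> simp only [hhv]
      · exact hne
    have hbdd : BddBelow {r : ℝ | ∃ v : Fin kk → ℝ, (∑ i ∈ S, |Z.mulVec v i|) ≠ 0 ∧
          r = (∑ i ∈ M \ S, |Z.mulVec v i|) / (∑ i ∈ S, |Z.mulVec v i|)} := by
      refine ⟨0, ?_⟩
      rintro r ⟨v, hv1, rfl⟩
      apply div_nonneg (Finset.sum_nonneg fun i _ => abs_nonneg _)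
        (Finset.sum_nonneg fun i _ => abs_nonneg _)
    have h1 := csInf_le hbdd hmem
    have h2 : (∑ i ∈ M \ S, |h i|) / (∑ i ∈ S, |h i|) ≤ 1 := (div_le_one hpos).2 key
    linarith
  have hSz : ∀ i ∈ S, h i = 0 := by
    intro i hi
    have := (Finset.sum_eq_zero_iff_of_nonneg fun i _ => abs_nonneg (h i)).1 hSzero i hi
    exact abs_eq_zero.1 this
  have hMSzero : ∑ i ∈ M \ S, |h i| = 0 := le_antisymm (by rw [hSzero] at key; exact key)
    (Finset.sum_nonneg fun i _ => abs_nonneg _)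
  have hMSz : ∀ i ∈ M \ S, h i = 0 := by
    intro i hi
    have := (Finset.sum_eq_zero_iff_of_nonneg fun i _ => abs_nonneg (h i)).1 hMSzero i hi
    exact abs_eq_zero.1 this
  intro i hi
  have : h i = 0 := by
    by_cases hiS : i ∈ S
    · exact hSz i hiS
    · exact hMSz i (mem_sdiff.2 ⟨hi, hiS⟩)
  have := sub_eq_zero.1 this
  exact this
end

section
/- Under the setup of the flow correction problem, suppose S = {i ∈ M : e_i ≠ 0}, Rec(S; A, M) > 1, and M contains a base set K (i.e., K ⊆ M with |K| = l−n and A^{K^c} invertible). If f* = Z x* with x* an ℓ1 minimizer of ‖Z_M x − f_M‖₁, then f* = ĥf exactly (exact recovery of the whole flow vector). -/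
open Finset in
/-- Exact recovery of the whole flow vector. Under the recoverability
condition Rec(S; A, M) > 1 and the assumption that M contains a base set K
(|K| = l − n, A^{K^c} invertible), the ℓ1 estimate f* = Z x* equals ĥf exactly. -/
theorem stmt5 (n l : ℕ) (A : Matrix (Fin n) (Fin l) ℝ)
    (hrank : A.rank = n)
    (Z : Matrix (Fin l) (Fin (l - n)) ℝ)
    (hZ : ∀ f : Fin l → ℝ, A.mulVec f = 0 ↔ ∃ x : Fin (l - n) → ℝ, Z.mulVec x = f)
    (hf : Fin l → ℝ) (hhf : A.mulVec hf = 0)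
    (M : Finset (Fin l)) (e : Fin l → ℝ)
    (fobs : Fin l → ℝ) (hfobs : ∀ i ∈ M, fobs i = hf i + e i)
    (S : Finset (Fin l)) (hS : S = M.filter (fun i => e i ≠ 0))
    (K : Finset (Fin l)) (hKM : K ⊆ M) (hKcard : K.card = l - n)
    (hKinv : ∃ eq : Fin n ≃ {i : Fin l // i ∈ Kᶜ},
      IsUnit (Matrix.of fun i j => A i (eq j).1).det)
    (hRec : 1 < sInf {r : ℝ | ∃ v : Fin (l - n) → ℝ,
      (∑ i ∈ S, |Z.mulVec v i|) ≠ 0 ∧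
      r = (∑ i ∈ M \ S, |Z.mulVec v i|) / (∑ i ∈ S, |Z.mulVec v i|)})
    (xstar : Fin (l - n) → ℝ)
    (hmin : ∀ x : Fin (l - n) → ℝ,
      (∑ i ∈ M, |Z.mulVec xstar i - fobs i|) ≤ ∑ i ∈ M, |Z.mulVec x i - fobs i|) :
    Z.mulVec xstar = hf := by
  obtain ⟨xh, hxh⟩ := (hZ hf).mp hhf
  set g : Fin l → ℝ := Z.mulVec xstar - hf with hg
  have hSM : S ⊆ M := by rw [hS]; exact Finset.filter_subset _ _
  have heMS : ∀ i ∈ M \ S, e i = 0 := by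
    intro i hi
    rw [Finset.mem_sdiff, hS, Finset.mem_filter] at hi
    by_contra h
    exact hi.2 ⟨hi.1, h⟩
  -- key inequality : ∑_{M\S} |g| ≤ ∑_S |g|
  have key : (∑ i ∈ M \ S, |g i|) ≤ ∑ i ∈ S, |g i| := by
    have h1 := hmin xh
    have hRHS : (∑ i ∈ M, |Z.mulVec xh i - fobs i|) = ∑ i ∈ S, |e i| := by
      have : (∑ i ∈ M, |Z.mulVec xh i - fobs i|) = ∑ i ∈ M, |e i| := by
        refine Finset.sum_congr rfl fun i hi => ?_
        rw [hxh, hfobs i hi]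
        rw [show hf i - (hf i + e i) = -(e i) by ring, abs_neg]
      rw [this]
      refine (Finset.sum_subset hSM fun i hi hni => ?_).symm
      rw [heMS i (Finset.mem_sdiff.mpr ⟨hi, hni⟩), abs_zero]
    have hLHS : (∑ i ∈ M, |Z.mulVec xstar i - fobs i|) =
        (∑ i ∈ M \ S, |g i|) + ∑ i ∈ S, |g i - e i| := by
      rw [← Finset.sum_sdiff hSM]
      congr 1
      · refine Finset.sum_congr rfl fun i hi => ?_
        rw [hfobs i (Finset.mem_sdiff.mp hi).1, heMS i hi]
        simp [hg]
      · refine Finset.sum_congr rfl fun i hi => ?_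
        rw [hfobs i (hSM hi)]
        simp [hg]
        ring_nf
    rw [hLHS, hRHS] at h1
    have h2 : (∑ i ∈ S, (|e i| - |g i|)) ≤ ∑ i ∈ S, |g i - e i| := by
      refine Finset.sum_le_sum fun i _ => ?_
      calc |e i| - |g i| ≤ |e i - g i| := abs_sub_abs_le_abs_sub _ _
        _ = |g i - e i| := abs_sub_comm _ _
    rw [Finset.sum_sub_distrib] at h2
    linarith
  -- g vanishes on S
  have hgnonneg : ∀ (T : Finset (Fin l)), 0 ≤ ∑ i ∈ T, |g i| :=
    fun T => Finset.sum_nonneg fun i _ => abs_nonneg _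
  have hSzero : (∑ i ∈ S, |g i|) = 0 := by
    by_contra hne
    have hgv : ∀ i, g i = Z.mulVec (xstar - xh) i := by
      intro i; rw [Matrix.mulVec_sub, hxh]
    have hmem : ((∑ i ∈ M \ S, |g i|) / (∑ i ∈ S, |g i|)) ∈
        {r : ℝ | ∃ v : Fin (l - n) → ℝ,
          (∑ i ∈ S, |Z.mulVec v i|) ≠ 0 ∧
          r = (∑ i ∈ M \ S, |Z.mulVec v i|) / (∑ i ∈ S, |Z.mulVec v i|)} := by
      refine ⟨xstar - xh, ?_, ?_⟩
      · simpa only [← hgv] using hne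
      · simp only [← hgv]
    have hbdd : BddBelow {r : ℝ | ∃ v : Fin (l - n) → ℝ,
          (∑ i ∈ S, |Z.mulVec v i|) ≠ 0 ∧
          r = (∑ i ∈ M \ S, |Z.mulVec v i|) / (∑ i ∈ S, |Z.mulVec v i|)} := by
      refine ⟨0, fun r hr => ?_⟩
      obtain ⟨v, _, hrv⟩ := hr
      rw [hrv]
      exact div_nonneg (Finset.sum_nonneg fun i _ => abs_nonneg _)
        (Finset.sum_nonneg fun i _ => abs_nonneg _)
    have hle := csInf_le hbdd hmem
    have hpos : 0 < ∑ i ∈ S, |g i| := lt_of_le_of_ne (hgnonneg S) (Ne.symm hne)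
    have hr1 : (∑ i ∈ M \ S, |g i|) / (∑ i ∈ S, |g i|) ≤ 1 :=
      (div_le_one hpos).mpr key
    linarith
  have hgM : ∀ i ∈ M, g i = 0 := by
    have hMSzero : (∑ i ∈ M \ S, |g i|) = 0 :=
      le_antisymm (by rw [hSzero] at key; exact key) (hgnonneg _)
    intro i hi
    by_cases hiS : i ∈ S
    · have := (Finset.sum_eq_zero_iff_of_nonneg fun i _ => abs_nonneg (g i)).mp hSzero i hiS
      exact abs_eq_zero.mp this
    · have := (Finset.sum_eq_zero_iff_of_nonneg fun i _ => abs_nonneg (g i)).mp hMSzero i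
        (Finset.mem_sdiff.mpr ⟨hi, hiS⟩)
      exact abs_eq_zero.mp this
  -- g is in the kernel of A
  have hAg : A.mulVec g = 0 := by
    rw [hg, Matrix.mulVec_sub, hhf, (hZ (Z.mulVec xstar)).mpr ⟨xstar, rfl⟩, sub_zero]
  -- invertibility step
  obtain ⟨eq, hdet⟩ := hKinv
  set B : Matrix (Fin n) (Fin n) ℝ := Matrix.of fun i j => A i (eq j).1 with hB
  have hBw : B.mulVec (fun k => g ((eq k).1)) = 0 := by
    funext i
    have hsplit : (∑ j ∈ K, A i j * g j) + (∑ j ∈ Kᶜ, A i j * g j) = ∑ j, A i j * g j :=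
      Finset.sum_add_sum_compl K _
    have hKzero : (∑ j ∈ K, A i j * g j) = 0 :=
      Finset.sum_eq_zero fun j hj => by rw [hgM j (hKM hj), mul_zero]
    have htot : (∑ j, A i j * g j) = 0 := congrFun hAg i
    have hKc : (∑ j ∈ Kᶜ, A i j * g j) = 0 := by
      rw [hKzero, zero_add] at hsplit; rw [hsplit, htot]
    calc B.mulVec (fun k => g ((eq k).1)) i
        = ∑ k, A i (eq k).1 * g ((eq k).1) := rfl
      _ = ∑ j : {j : Fin l // j ∈ Kᶜ}, A i j.1 * g j.1 :=
          Equiv.sum_comp eq (fun j : {j : Fin l // j ∈ Kᶜ} => A i j.1 * g j.1)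
      _ = ∑ j ∈ Kᶜ, A i j * g j := Finset.sum_coe_sort Kᶜ (fun j => A i j * g j)
      _ = 0 := hKc
  have : Invertible B := Matrix.invertibleOfIsUnitDet B hdet
  have hw : (fun k => g ((eq k).1)) = 0 := by
    calc (fun k => g ((eq k).1)) = (1 : Matrix (Fin n) (Fin n) ℝ).mulVec
          (fun k => g ((eq k).1)) := (Matrix.one_mulVec _).symm
      _ = (⅟B * B).mulVec (fun k => g ((eq k).1)) := by rw [invOf_mul_self]
      _ = (⅟B).mulVec (B.mulVec (fun k => g ((eq k).1))) := (Matrix.mulVec_mulVec _ _ _).symm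
      _ = (⅟B).mulVec 0 := by rw [hBw]
      _ = 0 := Matrix.mulVec_zero _
  have hgzero : ∀ i, g i = 0 := by
    intro i
    by_cases hi : i ∈ K
    · exact hgM i (hKM hi)
    · have hi' : i ∈ Kᶜ := Finset.mem_compl.mpr hi
      have := congrFun hw (eq.symm ⟨i, hi'⟩)
      simpa using this
  funext i
  have := hgzero i
  rw [hg] at this
  simpa [sub_eq_zero] using this
end

section
/- Stability theorem: let A ∈ ℝ^{n×l} have full row rank, ĥf ∈ Ker(A), M ⊆ {1,…,l} containing a base set, f_M = ĥf_M + e_M, S ⊆ M with Rec(S; A, M) = α > 1, and f* = Z x* with x* an ℓ1 minimizer of ‖Z_M x − f_M‖₁. Then ‖f* − ĥf‖₁ ≤ (2(α+1)/(α−1)) · min over base sets K ⊆ M of (‖(A^{K^c})^{-1} A^K‖₁ + 1) · ‖e_{M∖S}‖₁, where ‖·‖₁ on matrices is the operator norm induced by the ℓ1 vector norm. -/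
/-!
Write `f* − ĥf = h`. Since `f*` and `ĥf` both lie in `Ran Z = Ker A`, so does `h`, and comparing the
minimizer with the representative of `ĥf` gives `‖(h − e)_M‖₁ ≤ ‖e_M‖₁`, whence
`‖h_{M∖S}‖₁ ≤ ‖h_S‖₁ + 2‖e_{M∖S}‖₁`. Together with `α‖h_S‖₁ ≤ ‖h_{M∖S}‖₁` this bounds `‖h_M‖₁` by
`2(α+1)/(α−1) · ‖e_{M∖S}‖₁`. Finally, for a base set `K ⊆ M` the equation `A h = 0` expresses
`h_{Kᶜ} = −(A^{Kᶜ})⁻¹ A^K h_K`, so `‖h‖₁ ≤ (‖(A^{Kᶜ})⁻¹ A^K‖₁ + 1) ‖h_K‖₁ ≤ (…) ‖h_M‖₁`.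
-/

open Finset Matrix

noncomputable def l1OpNorm {p q : ℕ} (B : Matrix (Fin p) (Fin q) ℝ) : ℝ :=
  sSup {r : ℝ | ∃ x : Fin q → ℝ, x ≠ 0 ∧
    r = (∑ i, |B.mulVec x i|) / (∑ j, |x j|)}

lemma sum_abs_pos_of_ne_zero {ι : Type*} [Fintype ι] {x : ι → ℝ} (hx : x ≠ 0) :
    0 < ∑ j, |x j| := by
  obtain ⟨j, hj⟩ := Function.ne_iff.mp hx
  exact sum_pos' (f := fun j => |x j|) (fun j _ => abs_nonneg _) ⟨j, mem_univ j, abs_pos.mpr hj⟩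

lemma sum_abs_mulVec_le {m ι : Type*} [Fintype m] [Fintype ι] (B : Matrix m ι ℝ)
    (x : ι → ℝ) :
    ∑ i, |(B *ᵥ x) i| ≤ (∑ i, ∑ j, |B i j|) * ∑ j, |x j| := by
  rw [sum_mul]
  refine sum_le_sum fun i _ => ?_
  calc |(B *ᵥ x) i| ≤ ∑ j, |B i j| * |x j| := by
        simpa only [mulVec, dotProduct, abs_mul] using
          abs_sum_le_sum_abs (fun j => B i j * x j) univ
    _ ≤ ∑ j, |B i j| * ∑ j', |x j'| := by
        gcongr with j
        exact single_le_sum (f := fun j' => |x j'|) (fun _ _ => abs_nonneg _) (mem_univ j)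
    _ = (∑ j, |B i j|) * ∑ j, |x j| := by rw [sum_mul]

lemma l1OpNorm_bddAbove {p q : ℕ} (B : Matrix (Fin p) (Fin q) ℝ) :
    BddAbove {r : ℝ | ∃ x : Fin q → ℝ, x ≠ 0 ∧
      r = (∑ i, |B.mulVec x i|) / (∑ j, |x j|)} := by
  refine ⟨∑ i, ∑ j, |B i j|, ?_⟩
  rintro _ ⟨x, hx, rfl⟩
  rw [div_le_iff₀ (sum_abs_pos_of_ne_zero hx)]
  exact sum_abs_mulVec_le B x

lemma l1OpNorm_nonneg {p q : ℕ} (B : Matrix (Fin p) (Fin q) ℝ) : 0 ≤ l1OpNorm B :=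
  Real.sSup_nonneg <| by
    rintro _ ⟨x, -, rfl⟩
    exact div_nonneg (sum_nonneg fun _ _ => abs_nonneg _) (sum_nonneg fun _ _ => abs_nonneg _)

lemma sum_abs_mulVec_le_l1OpNorm_mul {p q : ℕ} (B : Matrix (Fin p) (Fin q) ℝ)
    (x : Fin q → ℝ) : ∑ i, |(B *ᵥ x) i| ≤ l1OpNorm B * ∑ j, |x j| := by
  rcases eq_or_ne x 0 with rfl | hx
  · simp
  · rw [← div_le_iff₀ (sum_abs_pos_of_ne_zero hx)]
    exact le_csSup (l1OpNorm_bddAbove B) ⟨x, hx, rfl⟩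

lemma Finset.sum_eq_sum_comp_equiv {ι κ M : Type*} [Fintype κ] [AddCommMonoid M] {K : Finset ι}
    (eK : κ ≃ K) (g : ι → M) : ∑ i ∈ K, g i = ∑ j, g (eK j) :=
  (sum_coe_sort K g).symm.trans (Equiv.sum_comp eK (fun i : K => g i)).symm

section BaseSet

variable {m k l : ℕ} (A : Matrix (Fin m) (Fin l) ℝ) {K : Finset (Fin l)}
  (eK : Fin k ≃ K) (eKc : Fin m ≃ ↥Kᶜ)

lemma mulVec_eq_add_mulVec_base (h : Fin l → ℝ) :
    A *ᵥ h = (of fun i j => A i (eK j).1) *ᵥ (fun j => h (eK j)) +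
      (of fun i j => A i (eKc j).1) *ᵥ (fun j => h (eKc j)) := by
  ext i
  simp only [mulVec, dotProduct, Pi.add_apply, of_apply]
  rw [← sum_add_sum_compl K, sum_eq_sum_comp_equiv eK, sum_eq_sum_comp_equiv eKc]

lemma sum_abs_le_of_mulVec_eq_zero (hdet : IsUnit (of fun i j => A i (eKc j).1).det)
    {h : Fin l → ℝ} (hker : A *ᵥ h = 0) :
    ∑ i, |h i| ≤ (l1OpNorm ((of fun i j => A i (eKc j).1)⁻¹ *
      (of fun i j => A i (eK j).1)) + 1) * ∑ i ∈ K, |h i| := by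
  set AK : Matrix (Fin m) (Fin k) ℝ := of fun i j => A i (eK j).1
  set AKc : Matrix (Fin m) (Fin m) ℝ := of fun i j => A i (eKc j).1
  set w : Fin k → ℝ := fun j => h (eK j)
  set u : Fin m → ℝ := fun j => h (eKc j)
  have hAKc : AKc *ᵥ u = -(AK *ᵥ w) :=
    eq_neg_of_add_eq_zero_right ((mulVec_eq_add_mulVec_base A eK eKc h).symm.trans hker)
  have hu : u = -((AKc⁻¹ * AK) *ᵥ w) := by
    rw [← mulVec_mulVec, ← mulVec_neg, ← hAKc, mulVec_mulVec, nonsing_inv_mul _ hdet,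
      one_mulVec]
  have hu_le : ∑ j, |u j| ≤ l1OpNorm (AKc⁻¹ * AK) * ∑ j, |w j| := by
    simpa only [hu, Pi.neg_apply, abs_neg] using sum_abs_mulVec_le_l1OpNorm_mul _ w
  calc ∑ i, |h i| = ∑ j, |w j| + ∑ j, |u j| := by
        rw [← sum_add_sum_compl K, sum_eq_sum_comp_equiv eK, sum_eq_sum_comp_equiv eKc]
    _ ≤ (l1OpNorm (AKc⁻¹ * AK) + 1) * ∑ i ∈ K, |h i| := by
        rw [sum_eq_sum_comp_equiv eK]
        linarith

end BaseSet

def baseSetConstants {n l : ℕ} (A : Matrix (Fin n) (Fin l) ℝ) (M : Finset (Fin l)) : Set ℝ :=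
  {c : ℝ | ∃ K : Finset (Fin l), K ⊆ M ∧ K.card = l - n ∧
    ∃ (eK : Fin (l - n) ≃ {i : Fin l // i ∈ K})
      (eKc : Fin n ≃ {i : Fin l // i ∈ Kᶜ}),
      IsUnit (Matrix.of fun i j => A i (eKc j).1).det ∧
      c = l1OpNorm ((Matrix.of fun i j => A i (eKc j).1)⁻¹ *
            (Matrix.of fun i j => A i (eK j).1)) + 1}

lemma baseSetConstants_nonempty {n l : ℕ} {A : Matrix (Fin n) (Fin l) ℝ} {M : Finset (Fin l)}
    (hBase : ∃ K : Finset (Fin l), K ⊆ M ∧ K.card = l - n ∧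
      ∃ eKc : Fin n ≃ {i : Fin l // i ∈ Kᶜ},
        IsUnit (Matrix.of fun i j => A i (eKc j).1).det) :
    (baseSetConstants A M).Nonempty := by
  obtain ⟨K, hKM, hKcard, eKc, hdet⟩ := hBase
  have hcard : Fintype.card (Fin (l - n)) = Fintype.card K := by simp [hKcard]
  exact ⟨_, K, hKM, hKcard, Fintype.equivOfCardEq hcard, eKc, hdet, rfl⟩

lemma nonneg_of_mem_baseSetConstants {n l : ℕ} {A : Matrix (Fin n) (Fin l) ℝ}
    {M : Finset (Fin l)} {c : ℝ} (hc : c ∈ baseSetConstants A M) : 0 ≤ c := by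
  obtain ⟨K, -, -, eK, eKc, -, rfl⟩ := hc
  linarith [l1OpNorm_nonneg ((of fun i j => A i (eKc j).1)⁻¹ * (of fun i j => A i (eK j).1))]

lemma sum_abs_le_of_mem_baseSetConstants {n l : ℕ} {A : Matrix (Fin n) (Fin l) ℝ}
    {M : Finset (Fin l)} {c : ℝ} (hc : c ∈ baseSetConstants A M) {h : Fin l → ℝ}
    (hker : A *ᵥ h = 0) : ∑ i, |h i| ≤ c * ∑ i ∈ M, |h i| := by
  have hc0 := nonneg_of_mem_baseSetConstants hc
  obtain ⟨K, hKM, -, eK, eKc, hdet, rfl⟩ := hc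
  calc ∑ i, |h i| ≤ _ * ∑ i ∈ K, |h i| := sum_abs_le_of_mulVec_eq_zero A eK eKc hdet hker
    _ ≤ _ * ∑ i ∈ M, |h i| := by gcongr

/-- The constant `Rec(S; A, M)`, with `Ran Z` parametrized by `Z`. -/
noncomputable def recConst {l d : ℕ} (Z : Matrix (Fin l) (Fin d) ℝ) (M S : Finset (Fin l)) :
    ℝ :=
  sInf {r : ℝ | ∃ v : Fin d → ℝ,
    (∑ i ∈ S, |Z.mulVec v i|) ≠ 0 ∧
    r = (∑ i ∈ M \ S, |Z.mulVec v i|) / (∑ i ∈ S, |Z.mulVec v i|)}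

lemma recConst_mul_le {l d : ℕ} (Z : Matrix (Fin l) (Fin d) ℝ) (M S : Finset (Fin l))
    (v : Fin d → ℝ) :
    recConst Z M S * ∑ i ∈ S, |(Z *ᵥ v) i| ≤ ∑ i ∈ M \ S, |(Z *ᵥ v) i| := by
  rcases (sum_nonneg fun i _ => abs_nonneg _ : (0 : ℝ) ≤ ∑ i ∈ S, |(Z *ᵥ v) i|).eq_or_lt
    with h0 | hpos
  · rw [← h0, mul_zero]
    exact sum_nonneg fun _ _ => abs_nonneg _
  · rw [← le_div_iff₀ hpos]
    refine csInf_le ⟨0, ?_⟩ ⟨v, hpos.ne', rfl⟩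
    rintro _ ⟨w, -, rfl⟩
    exact div_nonneg (sum_nonneg fun _ _ => abs_nonneg _) (sum_nonneg fun _ _ => abs_nonneg _)

lemma sum_abs_le_of_rec_of_sum_abs_sub_le {ι : Type*} [DecidableEq ι] {M S : Finset ι}
    (hSM : S ⊆ M) {h e : ι → ℝ} {α : ℝ} (hα : 1 < α)
    (hrec : α * ∑ i ∈ S, |h i| ≤ ∑ i ∈ M \ S, |h i|)
    (hmin : ∑ i ∈ M, |h i - e i| ≤ ∑ i ∈ M, |e i|) :
    ∑ i ∈ M, |h i| ≤ 2 * (α + 1) / (α - 1) * ∑ i ∈ M \ S, |e i| := by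
  rw [← sum_sdiff hSM (f := fun i => |h i - e i|), ← sum_sdiff hSM (f := fun i => |e i|)]
    at hmin
  rw [← sum_sdiff hSM]
  have hS : ∑ i ∈ S, |e i| - ∑ i ∈ S, |h i| ≤ ∑ i ∈ S, |h i - e i| := by
    rw [← sum_sub_distrib]
    exact sum_le_sum fun i _ => by rw [abs_sub_comm]; exact abs_sub_abs_le_abs_sub _ _
  have hMS : ∑ i ∈ M \ S, |h i| - ∑ i ∈ M \ S, |e i| ≤ ∑ i ∈ M \ S, |h i - e i| := by
    rw [← sum_sub_distrib]
    exact sum_le_sum fun i _ => abs_sub_abs_le_abs_sub _ _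
  have hα1 : 0 < α - 1 := by linarith
  rw [div_mul_eq_mul_div, le_div_iff₀ hα1]
  nlinarith [sum_nonneg fun i (_ : i ∈ S) => abs_nonneg (h i)]

lemma le_sInf_mul_of_forall_le_mul {s : Set ℝ} (hs : s.Nonempty) {a X : ℝ} (hX : 0 ≤ X)
    (h : ∀ c ∈ s, a ≤ c * X) : a ≤ sInf s * X := by
  rw [mul_comm, ← smul_eq_mul, ← Real.sInf_smul_of_nonneg hX]
  refine le_csInf hs.smul_set ?_
  rintro _ ⟨c, hc, rfl⟩
  exact (h c hc).trans_eq (mul_comm c X)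

theorem stmt8_general (n l : ℕ) (A : Matrix (Fin n) (Fin l) ℝ)
    (Z : Matrix (Fin l) (Fin (l - n)) ℝ)
    (hZ : ∀ f : Fin l → ℝ, A.mulVec f = 0 ↔ ∃ x : Fin (l - n) → ℝ, Z.mulVec x = f)
    (hf : Fin l → ℝ) (hhf : A.mulVec hf = 0)
    (M : Finset (Fin l)) (e : Fin l → ℝ)
    (fobs : Fin l → ℝ) (hfobs : ∀ i ∈ M, fobs i = hf i + e i)
    (S : Finset (Fin l)) (hSM : S ⊆ M)
    (hBase : ∃ K : Finset (Fin l), K ⊆ M ∧ K.card = l - n ∧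
      ∃ eKc : Fin n ≃ {i : Fin l // i ∈ Kᶜ},
        IsUnit (Matrix.of fun i j => A i (eKc j).1).det)
    (α : ℝ) (hα : 1 < α)
    (hRec : α = sInf {r : ℝ | ∃ v : Fin (l - n) → ℝ,
      (∑ i ∈ S, |Z.mulVec v i|) ≠ 0 ∧
      r = (∑ i ∈ M \ S, |Z.mulVec v i|) / (∑ i ∈ S, |Z.mulVec v i|)})
    (xstar : Fin (l - n) → ℝ)
    (hmin : ∀ x : Fin (l - n) → ℝ,
      (∑ i ∈ M, |Z.mulVec xstar i - fobs i|) ≤ ∑ i ∈ M, |Z.mulVec x i - fobs i|) :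
    (∑ i, |Z.mulVec xstar i - hf i|) ≤
      (2 * (α + 1) / (α - 1)) *
        sInf {c : ℝ | ∃ K : Finset (Fin l), K ⊆ M ∧ K.card = l - n ∧
          ∃ (eK : Fin (l - n) ≃ {i : Fin l // i ∈ K})
            (eKc : Fin n ≃ {i : Fin l // i ∈ Kᶜ}),
            IsUnit (Matrix.of fun i j => A i (eKc j).1).det ∧
            c = l1OpNorm ((Matrix.of fun i j => A i (eKc j).1)⁻¹ *
                  (Matrix.of fun i j => A i (eK j).1)) + 1} *
        ∑ i ∈ M \ S, |e i| := by
  obtain ⟨y, hy⟩ := (hZ hf).mp hhf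
  have hZh : Z *ᵥ (xstar - y) = Z *ᵥ xstar - hf := by rw [mulVec_sub, hy]
  have hker : A *ᵥ (Z *ᵥ xstar - hf) = 0 := (hZ _).mpr ⟨xstar - y, hZh⟩
  have hcompare : ∑ i ∈ M, |(Z *ᵥ xstar - hf) i - e i| ≤ ∑ i ∈ M, |e i| := by
    convert hmin y using 1 <;> refine sum_congr rfl fun i hi => ?_
    · rw [hfobs i hi, Pi.sub_apply, sub_sub]
    · rw [hfobs i hi, ← hy, sub_add_cancel_left, abs_neg]
  have hrec :
      α * ∑ i ∈ S, |(Z *ᵥ xstar - hf) i| ≤ ∑ i ∈ M \ S, |(Z *ᵥ xstar - hf) i| := by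
    have := recConst_mul_le Z M S (xstar - y)
    rwa [recConst, ← hRec, hZh] at this
  have hM := sum_abs_le_of_rec_of_sum_abs_sub_le hSM hα hrec hcompare
  have hX : 0 ≤ 2 * (α + 1) / (α - 1) * ∑ i ∈ M \ S, |e i| :=
    mul_nonneg (div_nonneg (by linarith) (by linarith)) (sum_nonneg fun _ _ => abs_nonneg _)
  calc ∑ i, |(Z *ᵥ xstar - hf) i|
      ≤ sInf (baseSetConstants A M) * (2 * (α + 1) / (α - 1) * ∑ i ∈ M \ S, |e i|) := by
        refine le_sInf_mul_of_forall_le_mul (baseSetConstants_nonempty hBase) hX fun c hc => ?_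
        exact (sum_abs_le_of_mem_baseSetConstants hc hker).trans
          (mul_le_mul_of_nonneg_left hM (nonneg_of_mem_baseSetConstants hc))
    _ = _ := by unfold baseSetConstants; ring

/-- Stability theorem. If Rec(S; A, M) = α > 1 and M contains a base set,
then ‖f* − ĥf‖₁ ≤ (2(α+1)/(α−1)) · min over base sets K ⊆ M of (‖(A^{K^c})⁻¹A^K‖₁ + 1)
· ‖e_{M∖S}‖₁. -/
theorem stmt8 (n l : ℕ) (A : Matrix (Fin n) (Fin l) ℝ) (hrank : A.rank = n)
    (Z : Matrix (Fin l) (Fin (l - n)) ℝ)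
    (hZ : ∀ f : Fin l → ℝ, A.mulVec f = 0 ↔ ∃ x : Fin (l - n) → ℝ, Z.mulVec x = f)
    (hf : Fin l → ℝ) (hhf : A.mulVec hf = 0)
    (M : Finset (Fin l)) (e : Fin l → ℝ)
    (fobs : Fin l → ℝ) (hfobs : ∀ i ∈ M, fobs i = hf i + e i)
    (S : Finset (Fin l)) (hSM : S ⊆ M)
    (hBase : ∃ K : Finset (Fin l), K ⊆ M ∧ K.card = l - n ∧
      ∃ eKc : Fin n ≃ {i : Fin l // i ∈ Kᶜ},
        IsUnit (Matrix.of fun i j => A i (eKc j).1).det)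
    (α : ℝ) (hα : 1 < α)
    (hRec : α = sInf {r : ℝ | ∃ v : Fin (l - n) → ℝ,
      (∑ i ∈ S, |Z.mulVec v i|) ≠ 0 ∧
      r = (∑ i ∈ M \ S, |Z.mulVec v i|) / (∑ i ∈ S, |Z.mulVec v i|)})
    (xstar : Fin (l - n) → ℝ)
    (hmin : ∀ x : Fin (l - n) → ℝ,
      (∑ i ∈ M, |Z.mulVec xstar i - fobs i|) ≤ ∑ i ∈ M, |Z.mulVec x i - fobs i|) :
    (∑ i, |Z.mulVec xstar i - hf i|) ≤
      (2 * (α + 1) / (α - 1)) *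
        sInf {c : ℝ | ∃ K : Finset (Fin l), K ⊆ M ∧ K.card = l - n ∧
          ∃ (eK : Fin (l - n) ≃ {i : Fin l // i ∈ K})
            (eKc : Fin n ≃ {i : Fin l // i ∈ Kᶜ}),
            IsUnit (Matrix.of fun i j => A i (eKc j).1).det ∧
            c = l1OpNorm ((Matrix.of fun i j => A i (eKc j).1)⁻¹ *
                  (Matrix.of fun i j => A i (eK j).1)) + 1} *
        ∑ i ∈ M \ S, |e i| :=
  stmt8_general n l A Z hZ hf hhf M e fobs hfobs S hSM hBase α hα hRec xstar hmin
end
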